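/- For any x ∈ WM(A) and any u,v ∈ A* with uv well-matched, the sequence (ext_{u,v}^{n!}(x))_{n∈ℕ} is a Cauchy sequence in (WM(A), d): for all m, n ≥ N, the words ext_{u,v}^{n!}(x) and ext_{u,v}^{m!}(x) cannot be separated by any finite Ext-algebra of size at most N. -/

import Mathlib

inductive VPKind : Type
  | call | ret | intern
deriving DecidableEq

class VPAlphabet (A : Type) where
  kind : A → VPKind

variable {A : Type} [VPAlphabet A]

inductive WellMatched : List A → Prop
  | nil : WellMatched []
  | intern (c : A) (hc : VPAlphabet.kind c = VPKind.intern) : WellMatched [c]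
  | ext (a b : A) (w : List A) (ha : VPAlphabet.kind a = VPKind.call)
      (hb : VPAlphabet.kind b = VPKind.ret) (hw : WellMatched w) :
      WellMatched (a :: w ++ [b])
  | append (u v : List A) (hu : WellMatched u) (hv : WellMatched v) : WellMatched (u ++ v)

theorem wm_insert {u v x : List A} (h : WellMatched (u ++ v)) (hx : WellMatched x) :
    WellMatched (u ++ x ++ v) := by
  suffices H : ∀ w, WellMatched w → ∀ u' v' : List A, w = u' ++ v' →
      WellMatched (u' ++ x ++ v') from H _ h u v rfl
  intro w hw
  induction hw with
  | nil =>
    intro u' v' huv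
    obtain ⟨rfl, rfl⟩ := List.append_eq_nil_iff.mp huv.symm
    simpa using hx
  | intern c hc =>
    intro u' v' huv
    rcases u' with _ | ⟨a, u''⟩
    · simp only [List.nil_append] at huv
      subst huv
      simpa using WellMatched.append x [c] hx (WellMatched.intern c hc)
    · have h1 : c = a := by injection huv
      have h2 : ([] : List A) = u'' ++ v' := by injection huv
      obtain ⟨rfl, rfl⟩ := List.append_eq_nil_iff.mp h2.symm
      subst h1
      simpa using WellMatched.append [c] x (WellMatched.intern c hc) hx
  | ext a b w' ha hb hw' ih =>
    intro u' v' huv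
    rcases u' with _ | ⟨a'', u''⟩
    · simp only [List.nil_append] at huv
      subst huv
      simpa using WellMatched.append x _ hx (WellMatched.ext a b w' ha hb hw')
    · have h1 : a = a'' := by injection huv
      have huv2 : w' ++ [b] = u'' ++ v' := by injection huv
      subst h1
      rcases List.eq_nil_or_concat v' with rfl | ⟨v'', b'', rfl⟩
      · have h3 : u'' = w' ++ [b] := by simpa using huv2.symm
        subst h3
        simpa using WellMatched.append _ x (WellMatched.ext a b w' ha hb hw') hx
      · have h4 : w' = u'' ++ v'' ∧ [b] = [b''] :=
          List.append_inj' (by simpa [List.append_assoc] using huv2) rfl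
        obtain ⟨rfl, hb'⟩ := h4
        have hbb : b = b'' := by injection hb'
        subst hbb
        have := WellMatched.ext a b _ ha hb (ih u'' v'' rfl)
        simpa [List.append_assoc] using this
  | append w₁ w₂ h₁ h₂ ih₁ ih₂ =>
    intro u' v' huv
    rcases List.append_eq_append_iff.mp huv with ⟨a', rfl, rfl⟩ | ⟨c', rfl, rfl⟩
    · have := WellMatched.append _ _ h₁ (ih₂ a' v' rfl)
      simpa [List.append_assoc] using this
    · have := WellMatched.append _ _ (ih₁ u' c' rfl) h₂
      simpa [List.append_assoc] using this

def WM (A : Type) [VPAlphabet A] : Type := {w : List A // WellMatched w}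

instance : Monoid (WM A) where
  one := ⟨[], WellMatched.nil⟩
  mul u v := ⟨u.1 ++ v.1, WellMatched.append _ _ u.2 v.2⟩
  mul_assoc a b c := Subtype.ext (List.append_assoc _ _ _)
  one_mul a := Subtype.ext (List.nil_append _)
  mul_one a := Subtype.ext (List.append_nil _)

@[simp] theorem WM.mul_val (x y : WM A) : (x * y).1 = x.1 ++ y.1 := rfl
@[simp] theorem WM.one_val : (1 : WM A).1 = [] := rfl

instance : Nonempty (WM A) := ⟨1⟩

def extWord (u v : List A) (h : WellMatched (u ++ v)) (x : WM A) : WM A :=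
  ⟨u ++ x.1 ++ v, wm_insert h x.2⟩

@[simp] theorem extWord_val (u v : List A) (h : WellMatched (u ++ v)) (x : WM A) :
    (extWord u v h x).1 = u ++ x.1 ++ v := rfl

structure ExtAlgebra (R : Type*) [Monoid R] where
  O : Submonoid (Function.End R)
  mulLeft_mem : ∀ r : R, (fun x => r * x) ∈ O
  mulRight_mem : ∀ r : R, (fun x => x * r) ∈ O

structure ExtAlgHom {R S : Type*} [Monoid R] [Monoid S]
    (ER : ExtAlgebra R) (ES : ExtAlgebra S) where
  toMonoidHom : R →* S
  opMap : ER.O →* ES.O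
  compat : ∀ (e : ER.O) (r : R),
    (opMap e : Function.End S) (toMonoidHom r) = toMonoidHom ((e : Function.End R) r)

/-- A morphism of `Ext`-algebras from the free `Ext`-algebra of well-matched words
into an `Ext`-algebra `R`, given by its monoid part and by the images of the
operations `ext_{u,v}`. -/
structure ExtHomWM (A : Type) [VPAlphabet A] {R : Type*} [Monoid R] (ER : ExtAlgebra R) where
  toMonoidHom : WM A →* R
  op : ∀ u v : List A, WellMatched (u ++ v) → ER.O
  op_one : op [] [] WellMatched.nil = 1
  op_comp : ∀ u v (h : WellMatched (u ++ v)) u' v' (h' : WellMatched (u' ++ v'))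
      (h'' : WellMatched ((u ++ u') ++ (v' ++ v))),
      op (u ++ u') (v' ++ v) h'' = op u v h * op u' v' h'
  op_spec : ∀ u v (h : WellMatched (u ++ v)) (x : WM A),
      (op u v h : Function.End R) (toMonoidHom x) = toMonoidHom (extWord u v h x)

/-- `R` recognises `L` via the morphism `φ` when `L` is the preimage of its image. -/
def Recognises {R : Type*} [Monoid R] {ER : ExtAlgebra R}
    (φ : ExtHomWM A ER) (L : Set (WM A)) : Prop :=
  L = φ.toMonoidHom ⁻¹' (φ.toMonoidHom '' L)

/-- The free `Ext`-algebra structure on the monoid of well-matched words. -/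
def freeExt (A : Type) [VPAlphabet A] : ExtAlgebra (WM A) where
  O :=
    { carrier := {e | ∃ u v, ∃ h : WellMatched (u ++ v), ∀ x : WM A, e x = extWord u v h x}
      one_mem' := ⟨[], [], WellMatched.nil, fun x => Subtype.ext (by show x.1 = [] ++ x.1 ++ []; simp)⟩
      mul_mem' := by
        rintro e f ⟨u, v, h, he⟩ ⟨u', v', h', hf⟩
        have h'' : WellMatched ((u ++ u') ++ (v' ++ v)) := by
          simpa [List.append_assoc] using wm_insert h h'
        exact ⟨u ++ u', v' ++ v, h'', fun x => by
          rw [show (e * f) x = e (f x) from rfl, hf, he]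
          exact Subtype.ext (by simp [List.append_assoc])⟩ }
  mulLeft_mem r := ⟨r.1, [], by simpa using r.2, fun x => Subtype.ext (by simp)⟩
  mulRight_mem r := ⟨[], r.1, by simpa using r.2, fun x => Subtype.ext (by simp)⟩

/-- A sub-`Ext`-algebra of an `Ext`-algebra. -/
structure SubExt {S : Type*} [Monoid S] (ES : ExtAlgebra S) where
  carrier : Submonoid S
  ops : Submonoid (Function.End S)
  ops_le : ops ≤ ES.O
  maps_to : ∀ e ∈ ops, ∀ x ∈ carrier, e x ∈ carrier
  mulLeft_mem : ∀ r ∈ carrier, (fun x => r * x) ∈ ops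
  mulRight_mem : ∀ r ∈ carrier, (fun x => x * r) ∈ ops

/-- The `Ext`-algebra structure induced on a sub-`Ext`-algebra. -/
def SubExt.toExtAlgebra {S : Type*} [Monoid S] {ES : ExtAlgebra S} (T : SubExt ES) :
    ExtAlgebra T.carrier where
  O :=
    { carrier := {e : Function.End T.carrier | ∃ f ∈ T.ops, ∀ x : T.carrier, (e x : S) = f x}
      one_mem' := ⟨1, T.ops.one_mem, fun _ => rfl⟩
      mul_mem' := by
        rintro e e' ⟨f, hf, he⟩ ⟨f', hf', he'⟩
        exact ⟨f * f', mul_mem hf hf', fun x => by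
          rw [show (e * e') x = e (e' x) from rfl, show (f * f') (x : S) = f (f' x) from rfl,
            ← he', he]⟩ }
  mulLeft_mem r := ⟨fun x => (r : S) * x, T.mulLeft_mem r r.2, fun _ => rfl⟩
  mulRight_mem r := ⟨fun x => x * (r : S), T.mulRight_mem r r.2, fun _ => rfl⟩

/-- `ER` is a quotient of `ES` if there is a surjective morphism of `Ext`-algebras
from `ES` onto `ER`. -/
def IsQuotientOf {R S : Type*} [Monoid R] [Monoid S]
    (ER : ExtAlgebra R) (ES : ExtAlgebra S) : Prop :=
  ∃ h : ExtAlgHom ES ER, Function.Surjective h.toMonoidHom ∧ Function.Surjective h.opMap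

/-- Bundled finite `Ext`-algebras. -/
structure BExt : Type 1 where
  carrier : Type
  [mon : Monoid carrier]
  [fin : Finite carrier]
  ext : ExtAlgebra carrier

attribute [instance] BExt.mon BExt.fin

section ListTake

variable {B : Type*}

theorem take_take_append (N k : ℕ) (hk : k ≤ N) (x v : List B) :
    ((x.take N) ++ v).take k = (x ++ v).take k := by
  rw [List.take_append, List.take_append, List.take_take,
    List.length_take]
  rw [min_eq_left hk]
  congr 2
  omega

theorem take_mid (N : ℕ) (u s v : List B) :
    (u ++ s.take N ++ v).take N = (u ++ s ++ v).take N := by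
  conv_lhs => rw [List.append_assoc, List.take_append]
  conv_rhs => rw [List.append_assoc, List.take_append]
  congr 1
  exact take_take_append N _ (Nat.sub_le _ _) s v

theorem take_append_right (N : ℕ) (u s : List B) :
    (u ++ s.take N).take N = (u ++ s).take N := by
  have := take_mid N u s ([] : List B)
  simpa using this

end ListTake

/-- The monoid of words of length at most `N`, with truncated concatenation. -/
def TruncM (B : Type) (N : ℕ) : Type := {l : List B // l.length ≤ N}

instance {B : Type} {N : ℕ} : Monoid (TruncM B N) where
  one := ⟨[], by simp⟩
  mul u v := ⟨(u.1 ++ v.1).take N, by rw [List.length_take]; exact min_le_left _ _⟩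
  mul_assoc a b c := Subtype.ext (by
    show ((a.1 ++ b.1).take N ++ c.1).take N = (a.1 ++ (b.1 ++ c.1).take N).take N
    rw [take_take_append N N le_rfl, take_append_right, List.append_assoc])
  one_mul a := Subtype.ext (by
    show (([] : List B) ++ a.1).take N = a.1
    rw [List.nil_append]
    exact List.take_of_length_le a.2)
  mul_one a := Subtype.ext (by
    show (a.1 ++ ([] : List B)).take N = a.1
    rw [List.append_nil]
    exact List.take_of_length_le a.2)

@[simp] theorem TruncM.one_val {B : Type} {N : ℕ} : (1 : TruncM B N).1 = [] := rfl
@[simp] theorem TruncM.mul_val {B : Type} {N : ℕ} (u v : TruncM B N) :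
    (u * v).1 = (u.1 ++ v.1).take N := rfl

instance {B : Type} [Finite B] {N : ℕ} : Finite (TruncM B N) := by
  haveI : Finite (Option B) := Finite.of_equiv (B ⊕ (PUnit : Type)) (Equiv.optionEquivSumPUnit B).symm
  refine Finite.of_injective
    (fun l : TruncM B N => fun i : Fin (N + 1) => l.1[(i : ℕ)]?) ?_
  intro a b hab
  apply Subtype.ext
  apply List.ext_getElem?
  intro i
  by_cases hi : i < N + 1
  · exact congrFun hab ⟨i, hi⟩
  · have ha := a.2
    have hb := b.2
    rw [List.getElem?_eq_none (by omega), List.getElem?_eq_none (by omega)]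

/-- Truncation is a monoid morphism on well-matched words. -/
def truncMonoidHom (A : Type) [VPAlphabet A] (N : ℕ) : WM A →* TruncM A N where
  toFun w := ⟨w.1.take N, by rw [List.length_take]; exact min_le_left _ _⟩
  map_one' := Subtype.ext (by simp)
  map_mul' u v := Subtype.ext (by
    show (u.1 ++ v.1).take N = (u.1.take N ++ v.1.take N).take N
    rw [take_take_append N N le_rfl, take_append_right])

/-- The truncation monoid as an `Ext`-algebra with all functions as operations. -/
def truncExt (A : Type) [VPAlphabet A] (N : ℕ) : ExtAlgebra (TruncM A N) where
  O := ⊤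
  mulLeft_mem _ := trivial
  mulRight_mem _ := trivial

def truncOp {A : Type} [VPAlphabet A] {N : ℕ} (u v : List A) : Function.End (TruncM A N) :=
  fun m => ⟨(u ++ m.1 ++ v).take N, by rw [List.length_take]; exact min_le_left _ _⟩

/-- The truncation morphism of `Ext`-algebras. -/
def truncExtHom (A : Type) [VPAlphabet A] (N : ℕ) : ExtHomWM A (truncExt A N) where
  toMonoidHom := truncMonoidHom A N
  op u v _ := ⟨truncOp u v, trivial⟩
  op_one := by
    apply Subtype.ext
    funext m
    apply Subtype.ext
    show (([] : List A) ++ m.1 ++ []).take N = m.1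
    simpa using List.take_of_length_le m.2
  op_comp u v h u' v' h' h'' := by
    apply Subtype.ext
    funext m
    apply Subtype.ext
    show ((u ++ u') ++ m.1 ++ (v' ++ v)).take N = (u ++ ((u' ++ m.1 ++ v').take N) ++ v).take N
    rw [take_mid]
    simp [List.append_assoc]
  op_spec u v h x := by
    apply Subtype.ext
    show (u ++ (x.1.take N) ++ v).take N = (u ++ x.1 ++ v).take N
    exact take_mid N u x.1 v

/-- `x` and `y` can be separated by a finite `Ext`-algebra of cardinality at most `n`. -/
def SepBound (n : ℕ) (x y : WM A) : Prop :=
  ∃ (R : BExt) (φ : ExtHomWM A R.ext),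
    Nat.card R.carrier ≤ n ∧ φ.toMonoidHom x ≠ φ.toMonoidHom y

/-- The minimal cardinality of a finite `Ext`-algebra separating `x` and `y`. -/
noncomputable def sepDeg (x y : WM A) : ℕ := sInf {n | SepBound n x y}

/-- The profinite (ultra)metric on well-matched words. -/
noncomputable def pdist (x y : WM A) : ℝ :=
  open scoped Classical in if x = y then 0 else (2 : ℝ)⁻¹ ^ sepDeg x y

theorem pdist_nonneg (x y : WM A) : 0 ≤ pdist x y := by
  unfold pdist
  split
  · exact le_rfl
  · positivity

theorem sepBound_comm {n : ℕ} {x y : WM A} : SepBound n x y ↔ SepBound n y x := by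
  constructor <;> rintro ⟨R, φ, h1, h2⟩ <;> exact ⟨R, φ, h1, h2.symm⟩

theorem pdist_comm (x y : WM A) : pdist x y = pdist y x := by
  have h1 : sepDeg x y = sepDeg y x := by
    unfold sepDeg
    congr 1
    ext n
    exact sepBound_comm
  rcases eq_or_ne x y with rfl | h
  · rfl
  · unfold pdist
    rw [if_neg h, if_neg (Ne.symm h), h1]

theorem exists_sepBound [Finite A] {x y : WM A} (hxy : x ≠ y) : ∃ n, SepBound n x y := by
  classical
  set N := max x.1.length y.1.length with hN
  refine ⟨Nat.card (TruncM A N),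
    { carrier := TruncM A N, ext := truncExt A N }, truncExtHom A N, le_rfl, ?_⟩
  intro hcontra
  have hv : x.1.take N = y.1.take N := congrArg Subtype.val hcontra
  rw [List.take_of_length_le (le_max_left _ _ : x.1.length ≤ N),
    List.take_of_length_le (le_max_right _ _ : y.1.length ≤ N)] at hv
  exact hxy (Subtype.ext hv)

theorem pdist_ultra [Finite A] (x y z : WM A) :
    pdist x z ≤ max (pdist x y) (pdist y z) := by
  rcases eq_or_ne x z with rfl | hxz
  · calc pdist x x = 0 := by simp [pdist]
      _ ≤ _ := le_max_of_le_left (pdist_nonneg _ _)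
  rcases eq_or_ne x y with rfl | hxy
  · exact le_max_of_le_right le_rfl
  rcases eq_or_ne y z with rfl | hyz
  · exact le_max_of_le_left le_rfl
  have hSne : {n | SepBound n x z}.Nonempty := exists_sepBound hxz
  obtain ⟨R, φ, hcard, hne⟩ := Nat.sInf_mem hSne
  by_cases hxy' : φ.toMonoidHom x = φ.toMonoidHom y
  · have hb : SepBound (sepDeg x z) y z := ⟨R, φ, hcard, by rw [← hxy']; exact hne⟩
    have hle : sepDeg y z ≤ sepDeg x z := Nat.sInf_le hb
    calc pdist x z = (2 : ℝ)⁻¹ ^ sepDeg x z := by rw [pdist, if_neg hxz]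
      _ ≤ (2 : ℝ)⁻¹ ^ sepDeg y z := pow_le_pow_of_le_one (by norm_num) (by norm_num) hle
      _ = pdist y z := by rw [pdist, if_neg hyz]
      _ ≤ _ := le_max_right _ _
  · have hb : SepBound (sepDeg x z) x y := ⟨R, φ, hcard, hxy'⟩
    have hle : sepDeg x y ≤ sepDeg x z := Nat.sInf_le hb
    calc pdist x z = (2 : ℝ)⁻¹ ^ sepDeg x z := by rw [pdist, if_neg hxz]
      _ ≤ (2 : ℝ)⁻¹ ^ sepDeg x y := pow_le_pow_of_le_one (by norm_num) (by norm_num) hle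
      _ = pdist x y := by rw [pdist, if_neg hxy]
      _ ≤ _ := le_max_left _ _

noncomputable instance WM.metricSpace [Finite A] : MetricSpace (WM A) where
  dist := pdist
  dist_self x := by simp [pdist]
  dist_comm := pdist_comm
  dist_triangle x y z := by
    refine (pdist_ultra x y z).trans (max_le ?_ ?_)
    · exact le_add_of_nonneg_right (pdist_nonneg _ _)
    · exact le_add_of_nonneg_left (pdist_nonneg _ _)
  eq_of_dist_eq_zero := by
    intro x y h
    by_contra hxy
    have h' : pdist x y = 0 := h
    rw [pdist, if_neg hxy] at h'
    exact absurd h' (ne_of_gt (pow_pos (by norm_num) _))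

section Iterate

open Function
open scoped Nat

variable {α : Type*} (f : α → α)

theorem exists_isPeriodicPt_iterate_of_card_le [Finite α] {N : ℕ} (hN : Nat.card α ≤ N)
    (s : α) : ∃ i p, i ≤ N ∧ 0 < p ∧ p ≤ N ∧ IsPeriodicPt f p (f^[i] s) := by
  have := Fintype.ofFinite α
  obtain ⟨a, b, hab, heq⟩ := Fintype.exists_ne_map_eq_of_card_lt
    (fun k : Fin (N + 1) => f^[k] s) (by rw [Fintype.card_fin, ← Nat.card_eq_fintype_card]; omega)
  wlog hlt : (a : ℕ) < b generalizing a b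
  · exact this b a hab.symm heq.symm (by omega)
  refine ⟨a, b - a, by omega, by omega, by omega, ?_⟩
  change f^[b - a] (f^[a] s) = f^[a] s
  rw [← iterate_add_apply, Nat.sub_add_cancel hlt.le]
  exact heq.symm

theorem iterate_eq_of_isPeriodicPt_iterate {s : α} {i p k l : ℕ}
    (hper : IsPeriodicPt f p (f^[i] s)) (hk : i ≤ k) (hl : i ≤ l) (hkl : k ≡ l [MOD p]) :
    f^[k] s = f^[l] s := by
  have reduce : ∀ j, i ≤ j → f^[j] s = f^[(j - i) % p] (f^[i] s) := fun j hj => by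
    rw [hper.iterate_mod_apply, ← iterate_add_apply, Nat.sub_add_cancel hj]
  have hmod : k - i ≡ l - i [MOD p] :=
    Nat.ModEq.add_right_cancel' i (by rwa [Nat.sub_add_cancel hk, Nat.sub_add_cancel hl])
  rw [reduce k hk, reduce l hl, hmod]

/-- Eventually the orbit of `s` has a period `p ≤ N`, and `p ∣ n !` for every `n ≥ N`. -/
theorem iterate_factorial_eq_of_card_le [Finite α] {N n m : ℕ} (hN : Nat.card α ≤ N)
    (hn : N ≤ n) (hm : N ≤ m) (s : α) : f^[n !] s = f^[m !] s := by
  obtain ⟨i, p, hi, hp, hpN, hper⟩ := exists_isPeriodicPt_iterate_of_card_le f hN s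
  have hfact : ∀ n, N ≤ n → i ≤ n ! ∧ n ! ≡ 0 [MOD p] := fun n hn =>
    ⟨hi.trans (hn.trans n.self_le_factorial),
      Nat.modEq_zero_iff_dvd.2 (Nat.dvd_factorial hp (hpN.trans hn))⟩
  exact iterate_eq_of_isPeriodicPt_iterate f hper (hfact n hn).1 (hfact m hm).1
    ((hfact n hn).2.trans (hfact m hm).2.symm)

end Iterate

theorem ExtHomWM.map_iterate_extWord {R : Type*} [Monoid R] {ER : ExtAlgebra R}
    (φ : ExtHomWM A ER) (u v : List A) (h : WellMatched (u ++ v)) (k : ℕ) (x : WM A) :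
    φ.toMonoidHom ((extWord u v h)^[k] x) =
      (φ.op u v h : Function.End R)^[k] (φ.toMonoidHom x) :=
  Function.Semiconj.iterate_right (fun y => (φ.op_spec u v h y).symm) k x

theorem SepBound.mono {n n' : ℕ} {x y : WM A} (hsep : SepBound n x y) (hn : n ≤ n') :
    SepBound n' x y :=
  let ⟨R, φ, hcard, hne⟩ := hsep
  ⟨R, φ, hcard.trans hn, hne⟩

theorem dist_le_of_not_sepBound [Finite A] {N : ℕ} {x y : WM A} (hsep : ¬ SepBound N x y) :
    dist x y ≤ (2 : ℝ)⁻¹ ^ N := by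
  rcases eq_or_ne x y with rfl | hxy
  · rw [dist_self]
    positivity
  have hN : N ≤ sepDeg x y :=
    not_lt.1 fun hlt => hsep (SepBound.mono (Nat.sInf_mem (exists_sepBound hxy)) hlt.le)
  calc dist x y = (2 : ℝ)⁻¹ ^ sepDeg x y := if_neg hxy
    _ ≤ (2 : ℝ)⁻¹ ^ N := pow_le_pow_of_le_one (by norm_num) (by norm_num) hN

theorem not_sepBound_iterate_extWord_factorial (u v : List A) (h : WellMatched (u ++ v))
    (x : WM A) {N n m : ℕ} (hn : N ≤ n) (hm : N ≤ m) :
    ¬ SepBound N ((extWord u v h)^[Nat.factorial n] x) ((extWord u v h)^[Nat.factorial m] x) := by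
  rintro ⟨R, φ, hcard, hne⟩
  apply hne
  rw [φ.map_iterate_extWord, φ.map_iterate_extWord]
  exact iterate_factorial_eq_of_card_le _ hcard hn hm _

/-- The sequence `ext_{u,v}^{n!}(x)` is Cauchy: for `n, m ≥ N` its terms cannot be
separated by a finite `Ext`-algebra of size at most `N`. -/
theorem statement12 {A : Type} [VPAlphabet A] [Finite A] (u v : List A)
    (h : WellMatched (u ++ v)) (x : WM A) :
    CauchySeq (fun n : ℕ => (extWord u v h)^[Nat.factorial n] x) ∧
    ∀ N n m : ℕ, N ≤ n → N ≤ m →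
      ¬ SepBound N ((extWord u v h)^[Nat.factorial n] x) ((extWord u v h)^[Nat.factorial m] x) := by
  refine ⟨cauchySeq_of_le_tendsto_0 (fun N => (2 : ℝ)⁻¹ ^ N) ?_ ?_,
    fun _ _ _ hn hm => not_sepBound_iterate_extWord_factorial u v h x hn hm⟩
  · exact fun _ _ _ hn hm =>
      dist_le_of_not_sepBound (not_sepBound_iterate_extWord_factorial u v h x hn hm)
  · exact tendsto_pow_atTop_nhds_zero_of_lt_one (by norm_num) (by norm_num)
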